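/- Let d = 2 and α = 2, and let φ(θ) = Σ_{x∈ℤ², x≠0} cos(θ·x) s(x). Then there exist a constant C > 1 and δ > 0 such that for every θ ∈ ℝ² with 0 < ‖θ‖ < δ, C^{-1} ‖θ‖² |log ‖θ‖| ≤ 1 − φ(θ) ≤ C ‖θ‖² |log ‖θ‖|. -/

import Mathlib

open scoped Classical

/-- Euclidean norm of a point of `ℤ²`. -/
noncomputable def znorm2 (z : Fin 2 → ℤ) : ℝ :=
  Real.sqrt (∑ i, ((z i : ℝ)) ^ 2)

/-- The normalizing constant `s* = Σ_{x∈ℤ², x≠0} ‖x‖^{-(2+α)}`. -/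
noncomputable def sstar2 (α : ℝ) : ℝ :=
  ∑' x : Fin 2 → ℤ, if x = 0 then 0 else znorm2 x ^ (-(2 + α))

/-- The step distribution `s(x) = ‖x‖^{-(2+α)}/s*` on `ℤ²`, `s(0) = 0`. -/
noncomputable def sfun2 (α : ℝ) (x : Fin 2 → ℤ) : ℝ :=
  if x = 0 then 0 else znorm2 x ^ (-(2 + α)) / sstar2 α

/-- The characteristic function `φ(θ) = Σ_{x≠0} cos(θ·x) s(x)` for `θ ∈ ℝ²`. -/
noncomputable def phi2 (α : ℝ) (θ : EuclideanSpace ℝ (Fin 2)) : ℝ :=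
  ∑' x : Fin 2 → ℤ, Real.cos (∑ i, θ i * (x i : ℝ)) * sfun2 α x

/-- `f_v(u) = (1/s*) (1 − cos(v·u))/‖u‖^{2+α}` for `u ≠ 0` (set to `0` at `u = 0`). -/
noncomputable def fv (α : ℝ) (v u : EuclideanSpace ℝ (Fin 2)) : ℝ :=
  if u = 0 then 0
  else (sstar2 α)⁻¹ * (1 - Real.cos ((inner ℝ v u : ℝ))) / ‖u‖ ^ (2 + α)

/-!
Cut `ℤ²` into the square shells `box n = {p | max |p.1| |p.2| = n}`: the shell `n ≥ 1` has `8n`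
points, all with `n² ≤ ‖p‖² ≤ 2n²`. Up to the factor `s*`, `1 - φ(θ)` is the sum over shells of
`Σ (1 - cos (θ·p)) ‖p‖⁻⁴`. Since `1 - cos t ≍ t²` for `|t| ≤ π` and a quarter turn of the shell
averages `(θ·p)²` to `‖θ‖²‖p‖²/2`, shell `n` contributes `≍ ‖θ‖²/n` as long as `n ≤ 1/‖θ‖`, and
at most `16/n³` in any case. Summing over `n` gives `s* (1 - φ(θ)) ≍ ‖θ‖² log (1/‖θ‖)`.
-/

open Finset Real

lemma sq_div_eight_le_one_sub_cos {x : ℝ} (hx : |x| ≤ π) : x ^ 2 / 8 ≤ 1 - cos x := by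
  have h := cos_le_one_sub_mul_cos_sq hx
  have hπ : 2 / π ^ 2 ≥ 1 / 8 := by
    rw [ge_iff_le, div_le_div_iff₀ (by norm_num) (by positivity)]
    nlinarith [pi_lt_four, pi_pos]
  nlinarith [sq_nonneg x]

namespace LongRangeWalk

noncomputable def sqNorm (p : ℤ × ℤ) : ℝ := (p.1 : ℝ) ^ 2 + (p.2 : ℝ) ^ 2

-- `weight (0, 0) = 0⁻¹ = 0`, matching `s(0) = 0`.
noncomputable def weight (p : ℤ × ℤ) : ℝ := (sqNorm p ^ 2)⁻¹

noncomputable def dot (θ : EuclideanSpace ℝ (Fin 2)) (p : ℤ × ℤ) : ℝ := θ 0 * p.1 + θ 1 * p.2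

def rot : ℤ × ℤ ≃ ℤ × ℤ where
  toFun p := (-p.2, p.1)
  invFun p := (p.2, -p.1)
  left_inv p := by simp
  right_inv p := by simp

noncomputable def shellSum (θ : EuclideanSpace ℝ (Fin 2)) (n : ℕ) : ℝ :=
  ∑ p ∈ box n, (1 - cos (dot θ p)) * weight p

section Shells

variable {p : ℤ × ℤ} {n : ℕ}

lemma existsUnique_mem_coe_box (p : ℤ × ℤ) :
    ∃! n : ℕ, p ∈ ((box n : Finset (ℤ × ℤ)) : Set (ℤ × ℤ)) := by
  simpa only [Finset.mem_coe] using Int.existsUnique_mem_box p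

lemma hasSum_sum_box {α : Type*} [AddCommMonoid α] [TopologicalSpace α] [ContinuousAdd α]
    [RegularSpace α] {f : ℤ × ℤ → α} {a : α} (hf : HasSum f a) :
    HasSum (fun n ↦ ∑ p ∈ box n, f p) a := by
  rw [← (Set.sigmaEquiv _ existsUnique_mem_coe_box).hasSum_iff] at hf
  exact hf.sigma fun n ↦ (box n).hasSum f

lemma summable_of_summable_sum_box {f : ℤ × ℤ → ℝ} (hf : 0 ≤ f)
    (h : Summable fun n ↦ ∑ p ∈ box n, f p) : Summable f := by
  refine (summable_partition hf existsUnique_mem_coe_box).mpr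
    ⟨fun n ↦ (box n).summable f, ?_⟩
  simpa only [Finset.coe_sort_coe, Finset.tsum_subtype] using h

lemma max_abs_eq_of_mem_box (hp : p ∈ box n) : max |(p.1 : ℝ)| |(p.2 : ℝ)| = n := by
  have := congrArg (Nat.cast (R := ℝ)) (Int.mem_box.mp hp)
  simpa [Nat.cast_max, Nat.cast_natAbs] using this

lemma sq_le_sqNorm_of_mem_box (hp : p ∈ box n) : (n : ℝ) ^ 2 ≤ sqNorm p := by
  rw [← max_abs_eq_of_mem_box hp, sqNorm]
  rcases max_choice |(p.1 : ℝ)| |(p.2 : ℝ)| with h | h <;>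
    rw [h, sq_abs] <;> nlinarith [sq_nonneg (p.1 : ℝ), sq_nonneg (p.2 : ℝ)]

lemma sqNorm_le_of_mem_box (hp : p ∈ box n) : sqNorm p ≤ 2 * (n : ℝ) ^ 2 := by
  have h := max_abs_eq_of_mem_box hp
  have h1 : (p.1 : ℝ) ^ 2 ≤ (n : ℝ) ^ 2 :=
    sq_le_sq.mpr (by rw [Nat.abs_cast, ← h]; exact le_max_left _ _)
  have h2 : (p.2 : ℝ) ^ 2 ≤ (n : ℝ) ^ 2 :=
    sq_le_sq.mpr (by rw [Nat.abs_cast, ← h]; exact le_max_right _ _)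
  rw [sqNorm]
  linarith

lemma sum_box_inv_sqNorm_pow_le (k : ℕ) (hn : n ≠ 0) :
    ∑ p ∈ box n, (sqNorm p ^ k)⁻¹ ≤ 8 * n / ((n : ℝ) ^ 2) ^ k := by
  have hn' : (0 : ℝ) < n := by positivity
  calc ∑ p ∈ box n, (sqNorm p ^ k)⁻¹ ≤ ∑ p ∈ box n, (((n : ℝ) ^ 2) ^ k)⁻¹ :=
        sum_le_sum fun p hp ↦ by gcongr; exact sq_le_sqNorm_of_mem_box hp
    _ = 8 * n / ((n : ℝ) ^ 2) ^ k := by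
        rw [sum_const, Int.card_box hn, nsmul_eq_mul, div_eq_mul_inv]; push_cast; ring

lemma le_sum_box_inv_sqNorm_pow (k : ℕ) (hn : n ≠ 0) :
    8 * n / (2 * (n : ℝ) ^ 2) ^ k ≤ ∑ p ∈ box n, (sqNorm p ^ k)⁻¹ := by
  have hn' : (0 : ℝ) < n := by positivity
  calc 8 * n / (2 * (n : ℝ) ^ 2) ^ k = ∑ p ∈ box n, ((2 * (n : ℝ) ^ 2) ^ k)⁻¹ := by
        rw [sum_const, Int.card_box hn, nsmul_eq_mul, div_eq_mul_inv]; push_cast; ring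
    _ ≤ ∑ p ∈ box n, (sqNorm p ^ k)⁻¹ := sum_le_sum fun p hp ↦ by
        have : 0 < sqNorm p := by nlinarith [sq_le_sqNorm_of_mem_box hp]
        gcongr
        exact sqNorm_le_of_mem_box hp

end Shells

section Rotation

variable (θ : EuclideanSpace ℝ (Fin 2)) (p : ℤ × ℤ) {n : ℕ}

lemma weight_nonneg : 0 ≤ weight p := by unfold weight; positivity

lemma sqNorm_mul_weight : sqNorm p * weight p = (sqNorm p)⁻¹ := by
  rcases eq_or_ne (sqNorm p) 0 with h | h
  · simp [weight, h]
  · rw [weight, sq, mul_inv, ← mul_assoc, mul_inv_cancel₀ h, one_mul]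

lemma dot_sq_le : dot θ p ^ 2 ≤ ‖θ‖ ^ 2 * sqNorm p := by
  rw [EuclideanSpace.real_norm_sq_eq, Fin.sum_univ_two, dot, sqNorm]
  nlinarith [sq_nonneg (θ 0 * p.2 - θ 1 * p.1)]

lemma dot_sq_add_dot_rot_sq : dot θ p ^ 2 + dot θ (rot p) ^ 2 = ‖θ‖ ^ 2 * sqNorm p := by
  simp only [EuclideanSpace.real_norm_sq_eq, Fin.sum_univ_two, dot, sqNorm, rot,
    Equiv.coe_fn_mk, Int.cast_neg]
  ring

lemma sqNorm_rot : sqNorm (rot p) = sqNorm p := by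
  simp only [sqNorm, rot, Equiv.coe_fn_mk, Int.cast_neg]
  ring

lemma rot_mem_box_iff : rot p ∈ box n ↔ p ∈ box n := by
  simp only [Int.mem_box, rot, Equiv.coe_fn_mk, Int.natAbs_neg, max_comm]

lemma sum_box_dot_sq_mul_weight :
    ∑ p ∈ box n, dot θ p ^ 2 * weight p = ‖θ‖ ^ 2 / 2 * ∑ p ∈ box n, (sqNorm p)⁻¹ := by
  have hrot : ∑ p ∈ box n, dot θ (rot p) ^ 2 * weight p = ∑ p ∈ box n, dot θ p ^ 2 * weight p :=
    sum_equiv rot (fun p ↦ (rot_mem_box_iff p).symm) fun p _ ↦ by rw [weight, weight, sqNorm_rot]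
  have hsum : ∑ p ∈ box n, (dot θ p ^ 2 + dot θ (rot p) ^ 2) * weight p =
      ‖θ‖ ^ 2 * ∑ p ∈ box n, (sqNorm p)⁻¹ := by
    simp only [dot_sq_add_dot_rot_sq, mul_assoc, sqNorm_mul_weight, mul_sum]
  simp only [add_mul, sum_add_distrib, hrot] at hsum
  linarith

end Rotation

section ShellSum

variable (θ : EuclideanSpace ℝ (Fin 2)) {n : ℕ}

lemma shellSum_nonneg : 0 ≤ shellSum θ n :=
  sum_nonneg fun p _ ↦ mul_nonneg (by linarith [cos_le_one (dot θ p)]) (weight_nonneg p)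

lemma shellSum_le_sq_div (hn : n ≠ 0) : shellSum θ n ≤ 4 * ‖θ‖ ^ 2 / n := by
  have hn' : (0 : ℝ) < n := by positivity
  calc shellSum θ n ≤ ∑ p ∈ box n, ‖θ‖ ^ 2 / 2 * (sqNorm p ^ 1)⁻¹ := sum_le_sum fun p _ ↦ by
        have h : 1 - cos (dot θ p) ≤ ‖θ‖ ^ 2 * sqNorm p / 2 := by
          linarith [one_sub_sq_div_two_le_cos (x := dot θ p), dot_sq_le θ p]
        calc (1 - cos (dot θ p)) * weight p ≤ ‖θ‖ ^ 2 * sqNorm p / 2 * weight p := by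
              gcongr; exact weight_nonneg p
          _ = ‖θ‖ ^ 2 / 2 * (sqNorm p ^ 1)⁻¹ := by rw [pow_one, ← sqNorm_mul_weight]; ring
    _ ≤ ‖θ‖ ^ 2 / 2 * (8 * n / ((n : ℝ) ^ 2) ^ 1) := by
        rw [← mul_sum]; gcongr; exact sum_box_inv_sqNorm_pow_le 1 hn
    _ = 4 * ‖θ‖ ^ 2 / n := by field_simp; ring

lemma shellSum_le (hn : n ≠ 0) : shellSum θ n ≤ 16 / n ^ 3 := by
  have hn' : (0 : ℝ) < n := by positivity
  calc shellSum θ n ≤ ∑ p ∈ box n, 2 * (sqNorm p ^ 2)⁻¹ := sum_le_sum fun p _ ↦ by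
        rw [← weight]; gcongr
        · exact weight_nonneg p
        · linarith [neg_one_le_cos (dot θ p)]
    _ ≤ 2 * (8 * n / ((n : ℝ) ^ 2) ^ 2) := by
        rw [← mul_sum]; gcongr; exact sum_box_inv_sqNorm_pow_le 2 hn
    _ = 16 / n ^ 3 := by field_simp; ring

lemma sq_div_le_shellSum (hn : n ≠ 0) (hθn : ‖θ‖ * n ≤ 1) : ‖θ‖ ^ 2 / (4 * n) ≤ shellSum θ n := by
  have hn' : (0 : ℝ) < n := by positivity
  calc ‖θ‖ ^ 2 / (4 * n) = ‖θ‖ ^ 2 / 16 * (8 * n / (2 * (n : ℝ) ^ 2) ^ 1) := by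
        field_simp; ring
    _ ≤ ‖θ‖ ^ 2 / 16 * ∑ p ∈ box n, (sqNorm p ^ 1)⁻¹ := by
        gcongr; exact le_sum_box_inv_sqNorm_pow 1 hn
    _ = ∑ p ∈ box n, dot θ p ^ 2 / 8 * weight p := by
        simp only [pow_one, div_mul_eq_mul_div _ (8 : ℝ), ← sum_div, sum_box_dot_sq_mul_weight]
        ring
    _ ≤ shellSum θ n := sum_le_sum fun p hp ↦ by
        have hθn' : (‖θ‖ * n) ^ 2 ≤ 1 := pow_le_one₀ (by positivity) hθn
        have hdot : dot θ p ^ 2 ≤ π ^ 2 := calc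
          dot θ p ^ 2 ≤ ‖θ‖ ^ 2 * sqNorm p := dot_sq_le θ p
          _ ≤ ‖θ‖ ^ 2 * (2 * n ^ 2) := by gcongr; exact sqNorm_le_of_mem_box hp
          _ ≤ π ^ 2 := by nlinarith [pi_gt_three]
        gcongr
        · exact weight_nonneg p
        · exact sq_div_eight_le_one_sub_cos (abs_le_of_sq_le_sq hdot pi_pos.le)

lemma summable_weight : Summable weight := by
  refine summable_of_summable_sum_box weight_nonneg <|
    ((Real.summable_nat_pow_inv.mpr (by norm_num : 1 < 3)).mul_left 8).of_nonneg_of_le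
      (fun n ↦ sum_nonneg fun p _ ↦ weight_nonneg p) fun n ↦ ?_
  rcases eq_or_ne n 0 with rfl | hn
  · simp [weight, sqNorm]
  · have hn' : (0 : ℝ) < n := by positivity
    calc ∑ p ∈ box n, weight p ≤ 8 * n / ((n : ℝ) ^ 2) ^ 2 := sum_box_inv_sqNorm_pow_le 2 hn
      _ = 8 * ((n : ℝ) ^ 3)⁻¹ := by field_simp

lemma summable_one_sub_cos_mul_weight : Summable fun p ↦ (1 - cos (dot θ p)) * weight p :=
  (summable_weight.mul_left 2).of_nonneg_of_le
    (fun p ↦ mul_nonneg (by linarith [cos_le_one (dot θ p)]) (weight_nonneg p))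
    fun p ↦ by gcongr; exacts [weight_nonneg p, by linarith [neg_one_le_cos (dot θ p)]]

lemma hasSum_shellSum :
    HasSum (shellSum θ) (∑' p, (1 - cos (dot θ p)) * weight p) :=
  hasSum_sum_box (summable_one_sub_cos_mul_weight θ).hasSum

lemma shellSum_zero : shellSum θ 0 = 0 := by simp [shellSum, dot]

lemma tsum_shellSum_le {N : ℕ} (hN : N ≠ 0) :
    ∑' n, shellSum θ n ≤ 4 * ‖θ‖ ^ 2 * (1 + log N) + 32 / N ^ 2 := by
  have hN' : (0 : ℝ) < N := by positivity
  refine Real.tsum_le_of_sum_range_le (fun n ↦ shellSum_nonneg θ) fun M ↦ ?_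
  have hlow : ∑ n ∈ range (N + 1), shellSum θ n ≤ 4 * ‖θ‖ ^ 2 * (1 + log N) := calc
    ∑ n ∈ range (N + 1), shellSum θ n ≤ ∑ n ∈ range N, 4 * ‖θ‖ ^ 2 / (n + 1 : ℕ) := by
        rw [sum_range_succ', shellSum_zero, add_zero]
        exact sum_le_sum fun n _ ↦ shellSum_le_sq_div θ n.succ_ne_zero
    _ = 4 * ‖θ‖ ^ 2 * harmonic N := by
        simp only [harmonic, div_eq_mul_inv, ← mul_sum]; push_cast; rfl
    _ ≤ 4 * ‖θ‖ ^ 2 * (1 + log N) := by gcongr; exact harmonic_le_one_add_log N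
  have hhigh : ∑ n ∈ Ioo N M, shellSum θ n ≤ 32 / N ^ 2 := calc
    ∑ n ∈ Ioo N M, shellSum θ n ≤ ∑ n ∈ Ioo N M, 16 / N * ((n : ℝ) ^ 2)⁻¹ :=
        sum_le_sum fun n hn ↦ by
          have hNn : N < n := (mem_Ioo.mp hn).1
          have hNn' : (N : ℝ) ≤ n := by exact_mod_cast hNn.le
          have hn' : (0 : ℝ) < n := hN'.trans_le hNn'
          calc shellSum θ n ≤ 16 / n ^ 3 := shellSum_le θ (by omega)
            _ ≤ 16 / (N * n ^ 2) := by
                rw [pow_succ']; gcongr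
            _ = 16 / N * ((n : ℝ) ^ 2)⁻¹ := by ring
    _ ≤ 16 / N * (2 / (N + 1)) := by rw [← mul_sum]; gcongr; exact sum_Ioo_inv_sq_le N M
    _ ≤ 32 / N ^ 2 := by
        rw [div_mul_div_comm, div_le_div_iff₀ (by positivity) (by positivity)]; nlinarith
  calc ∑ n ∈ range M, shellSum θ n ≤ ∑ n ∈ range (N + 1) ∪ Ioo N M, shellSum θ n :=
        sum_le_sum_of_subset_of_nonneg (fun n hn ↦ by simp at hn ⊢; omega)
          fun n _ _ ↦ shellSum_nonneg θ
    _ = ∑ n ∈ range (N + 1), shellSum θ n + ∑ n ∈ Ioo N M, shellSum θ n :=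
        sum_union (disjoint_left.mpr fun n h h' ↦ by simp at h h'; omega)
    _ ≤ 4 * ‖θ‖ ^ 2 * (1 + log N) + 32 / N ^ 2 := add_le_add hlow hhigh

lemma sq_mul_log_le_tsum_shellSum {N : ℕ} (hN : ‖θ‖ * N ≤ 1) :
    ‖θ‖ ^ 2 / 4 * log (N + 1) ≤ ∑' n, shellSum θ n := calc
  ‖θ‖ ^ 2 / 4 * log (N + 1) ≤ ‖θ‖ ^ 2 / 4 * harmonic N := by
      gcongr; exact_mod_cast log_add_one_le_harmonic N
  _ = ∑ n ∈ range N, ‖θ‖ ^ 2 / (4 * (n + 1 : ℕ)) := by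
      simp only [harmonic, div_eq_mul_inv, mul_inv, ← mul_sum]; push_cast; ring
  _ ≤ ∑ n ∈ range N, shellSum θ (n + 1) := sum_le_sum fun n hn ↦
      sq_div_le_shellSum θ n.succ_ne_zero <|
        le_trans (by gcongr; exact_mod_cast mem_range.mp hn) hN
  _ = ∑ n ∈ range (N + 1), shellSum θ n := by rw [sum_range_succ', shellSum_zero, add_zero]
  _ ≤ ∑' n, shellSum θ n :=
      (hasSum_shellSum θ).summable.sum_le_tsum _ fun n _ ↦ shellSum_nonneg θ

end ShellSum

lemma znorm2_rpow_eq_weight (x : Fin 2 → ℤ) :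
    znorm2 x ^ (-(2 + 2 : ℝ)) = weight (finTwoArrowEquiv ℤ x) := by
  have hs : 0 ≤ sqNorm (finTwoArrowEquiv ℤ x) := by unfold sqNorm; positivity
  have hz : znorm2 x = √(sqNorm (finTwoArrowEquiv ℤ x)) := by
    simp [znorm2, sqNorm, Fin.sum_univ_two]
  rw [hz, show (-(2 + 2 : ℝ)) = ((-(2 * 2 : ℕ) : ℤ) : ℝ) by norm_num, rpow_intCast, zpow_neg,
    zpow_natCast, pow_mul, sq_sqrt hs, weight]

lemma sstar2_two : sstar2 2 = ∑' p, weight p := by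
  rw [sstar2, ← (finTwoArrowEquiv ℤ).tsum_eq]
  refine tsum_congr fun x ↦ ?_
  split_ifs with hx
  · simp [hx, weight, sqNorm]
  · exact znorm2_rpow_eq_weight x

lemma sstar2_two_pos : 0 < sstar2 2 := by
  rw [sstar2_two]
  exact summable_weight.tsum_pos weight_nonneg (1, 0) (by norm_num [weight, sqNorm])

lemma sfun2_two (x : Fin 2 → ℤ) : sfun2 2 x = weight (finTwoArrowEquiv ℤ x) / sstar2 2 := by
  rw [sfun2]
  split_ifs with hx
  · simp [hx, weight, sqNorm]
  · rw [znorm2_rpow_eq_weight]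

lemma one_sub_phi2_two (θ : EuclideanSpace ℝ (Fin 2)) :
    1 - phi2 2 θ = (∑' n, shellSum θ n) / sstar2 2 := by
  have hphi : phi2 2 θ = (∑' p, cos (dot θ p) * weight p) / sstar2 2 := by
    rw [phi2, ← tsum_div_const, ← (finTwoArrowEquiv ℤ).tsum_eq]
    refine tsum_congr fun x ↦ ?_
    simp [sfun2_two, dot, Fin.sum_univ_two, mul_div_assoc]
  have hcos : Summable fun p ↦ cos (dot θ p) * weight p :=
    (summable_weight.sub (summable_one_sub_cos_mul_weight θ)).congr fun p ↦ by ring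
  rw [hphi, (hasSum_shellSum θ).tsum_eq, eq_div_iff sstar2_two_pos.ne', sub_mul,
    div_mul_cancel₀ _ sstar2_two_pos.ne', one_mul, sstar2_two, ← summable_weight.tsum_sub hcos]
  exact tsum_congr fun p ↦ by ring

section Asymptotics

variable {θ : EuclideanSpace ℝ (Fin 2)}

lemma one_sub_phi2_two_le (h0 : 0 < ‖θ‖) (hθ : ‖θ‖ < exp (-2)) :
    1 - phi2 2 θ ≤ 24 / sstar2 2 * ‖θ‖ ^ 2 * |log ‖θ‖| := by
  set r := ‖θ‖
  have hr1 : r < 1 := hθ.trans (exp_lt_one_iff.mpr (by norm_num))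
  have hlog : log r < -2 := (log_lt_iff_lt_exp h0).mpr hθ
  rw [abs_of_neg (log_neg h0 hr1)]
  set N := ⌈r⁻¹⌉₊
  have hN : r⁻¹ ≤ N := Nat.le_ceil _
  have hN2 : (N : ℝ) ≤ 2 * r⁻¹ := by
    linarith [Nat.ceil_lt_add_one (inv_nonneg.mpr h0.le), (one_lt_inv₀ h0).mpr hr1]
  have hlogN : log N ≤ log 2 - log r := by
    rw [sub_eq_add_neg, ← log_inv, ← log_mul two_ne_zero (inv_ne_zero h0.ne')]
    exact log_le_log (by positivity) hN2
  have hNr : 32 / (N : ℝ) ^ 2 ≤ 32 * r ^ 2 := by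
    rw [div_le_iff₀ (by positivity)]
    have : 1 ≤ r * N := by rwa [← inv_le_iff_one_le_mul₀' h0]
    nlinarith
  rw [one_sub_phi2_two, div_le_iff₀ sstar2_two_pos]
  calc ∑' n, shellSum θ n ≤ 4 * r ^ 2 * (1 + log N) + 32 / N ^ 2 :=
        tsum_shellSum_le θ (Nat.ceil_pos.mpr (by positivity)).ne'
    _ ≤ 24 * r ^ 2 * -log r := by nlinarith [log_two_lt_d9, sq_nonneg r]
    _ = 24 / sstar2 2 * r ^ 2 * -log r * sstar2 2 := by field_simp [sstar2_two_pos.ne']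

lemma le_one_sub_phi2_two (h0 : 0 < ‖θ‖) (hθ : ‖θ‖ ≤ 1) :
    (4 * sstar2 2)⁻¹ * ‖θ‖ ^ 2 * |log ‖θ‖| ≤ 1 - phi2 2 θ := by
  set r := ‖θ‖
  rw [abs_of_nonpos (log_nonpos h0.le hθ)]
  set N := ⌊r⁻¹⌋₊
  have hN : r * N ≤ 1 := calc
    r * N ≤ r * r⁻¹ := by gcongr; exact Nat.floor_le (by positivity)
    _ = 1 := mul_inv_cancel₀ h0.ne'
  have hlogN : -log r ≤ log (N + 1) := by
    rw [← log_inv]; exact log_le_log (by positivity) (Nat.lt_floor_add_one _).le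
  rw [one_sub_phi2_two, le_div_iff₀ sstar2_two_pos]
  calc (4 * sstar2 2)⁻¹ * r ^ 2 * -log r * sstar2 2 = r ^ 2 / 4 * -log r := by
        field_simp [sstar2_two_pos.ne']
    _ ≤ r ^ 2 / 4 * log (N + 1) := by gcongr
    _ ≤ ∑' n, shellSum θ n := sq_mul_log_le_tsum_shellSum θ hN

end Asymptotics

end LongRangeWalk

open LongRangeWalk

/-- for `d = 2`, `α = 2`, there are `C > 1` and `δ > 0` such that for all
`θ ∈ ℝ²` with `0 < ‖θ‖ < δ`,
`C⁻¹ ‖θ‖² |log ‖θ‖| ≤ 1 − φ(θ) ≤ C ‖θ‖² |log ‖θ‖|`. -/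
theorem statement14 :
    ∃ C : ℝ, 1 < C ∧ ∃ δ : ℝ, 0 < δ ∧
      ∀ θ : EuclideanSpace ℝ (Fin 2), 0 < ‖θ‖ → ‖θ‖ < δ →
        C⁻¹ * ‖θ‖ ^ 2 * |Real.log ‖θ‖| ≤ 1 - phi2 2 θ ∧
        1 - phi2 2 θ ≤ C * ‖θ‖ ^ 2 * |Real.log ‖θ‖| := by
  have hσ := sstar2_two_pos
  refine ⟨4 * sstar2 2 + 24 / sstar2 2 + 1, lt_add_of_pos_left _ (by positivity),
    exp (-2), exp_pos _, fun θ h0 hθ ↦ ⟨?_, ?_⟩⟩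
  · calc _ ≤ (4 * sstar2 2)⁻¹ * ‖θ‖ ^ 2 * |log ‖θ‖| := by
          gcongr; linarith [div_pos (by norm_num : (0:ℝ) < 24) hσ]
      _ ≤ 1 - phi2 2 θ :=
          le_one_sub_phi2_two h0 (hθ.le.trans (exp_le_one_iff.mpr (by norm_num)))
  · calc _ ≤ 24 / sstar2 2 * ‖θ‖ ^ 2 * |log ‖θ‖| := one_sub_phi2_two_le h0 hθ
      _ ≤ _ := by gcongr; linarith
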